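/- In the setting of the iterated central amalgamation: if a subgroup H of G is spread out and N is a non-trivial normal subgroup of H, then for every k ∈ ℕ₀ there exist h ∈ N and g ∈ H such that the commutator g·h·g⁻¹·h⁻¹ does not lie in G_k. -/

import Mathlib

universe u

/-- The subgroup `D` of `G` is the free product of its subgroups `A` and `C` with
amalgamated central subgroup `B`: the cocone of inclusions satisfies the universal
property of the pushout of the two inclusions `B → A` and `B → C`. -/
structure IsCentralAmalgamIn {G : Type u} [Group G] (A C B D : Subgroup G) : Prop where
  A_le : A ≤ D
  C_le : C ≤ D
  B_le_A : B ≤ A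
  B_le_C : B ≤ C
  central_A : ∀ b ∈ B, ∀ a ∈ A, b * a = a * b
  central_C : ∀ b ∈ B, ∀ c ∈ C, b * c = c * b
  isPushout : ∀ (K : Type u) [Group K] (f : ↥A →* K) (g : ↥C →* K),
      (∀ (b : G) (hb : b ∈ B), f ⟨b, B_le_A hb⟩ = g ⟨b, B_le_C hb⟩) →
      ∃! φ : ↥D →* K,
        φ.comp (Subgroup.inclusion A_le) = f ∧ φ.comp (Subgroup.inclusion C_le) = g

/-- The setting of the iterated central amalgamation
`G = ⋃_n (H₀ *_{B₀} H₁ *_{B₁} ⋯ *_{B_{n-1}} H_n)`: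
`B₀ ⊇ B₁ ⊇ ⋯` is a descending sequence of groups with `⋂_n B_n = 1`; for each `n`,
`B_n` is a central subgroup of both `H_n` and `H_{n+1}` with `B_n ≠ H_n` and
`B_n ≠ H_{n+1}`; `G₀ = H₀`, `G_{n+1} = G_n *_{B_n} H_{n+1}` (free product with central
amalgamation) and `G = ⋃_n G_n`.  All groups are realized as subgroups of `G`. -/
structure IteratedAmalgam (G : Type u) [Group G] where
  Gn : ℕ → Subgroup G
  Hn : ℕ → Subgroup G
  Bn : ℕ → Subgroup G
  B_antitone : ∀ n, Bn (n + 1) ≤ Bn n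
  B_iInf : ⨅ n, Bn n = ⊥
  B_le_H : ∀ n, Bn n ≤ Hn n
  B_le_H_succ : ∀ n, Bn n ≤ Hn (n + 1)
  B_central_H : ∀ n, ∀ b ∈ Bn n, ∀ h ∈ Hn n, b * h = h * b
  B_central_H_succ : ∀ n, ∀ b ∈ Bn n, ∀ h ∈ Hn (n + 1), b * h = h * b
  B_ne_H : ∀ n, Bn n ≠ Hn n
  B_ne_H_succ : ∀ n, Bn n ≠ Hn (n + 1)
  G_zero : Gn 0 = Hn 0
  amalgam : ∀ n, IsCentralAmalgamIn (Gn n) (Hn (n + 1)) (Bn n) (Gn (n + 1))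
  iSup_G : ⨆ n, Gn n = ⊤

/-- A subgroup `H` of `G` is *spread out* if `H ⊄ G_n` for every `n`. -/
def IteratedAmalgam.SpreadOut {G : Type u} [Group G] (S : IteratedAmalgam G)
    (H : Subgroup G) : Prop :=
  ∀ n : ℕ, ¬ H ≤ S.Gn n

/-!
Take `x ≠ 1` in `N`. It lies in some `G_j` and, as `⋂ B_n = 1`, outside some `B_n`; for `m` at
least `k`, `j`, `n` pick `g ∈ H` outside `G_m`. If `[g, x] ∈ G_k ⊆ G_m` then `g x g⁻¹ ∈ G_m`.
In an amalgamated product `A *_B C` with `B` normal in `A`, an element conjugating some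
`a ∈ A \ B` into `A` must itself lie in `A`: otherwise, after absorbing its first and last letters
from `A` into `a`, it is a reduced word `w` starting and ending outside `A`, and `w a' w⁻¹` is a
reduced word of length at least three, hence not in `A` by the normal form theorem. Applying
this to `G_{M+1} = G_M *_{B_M} H_{M+1}` for `M = ..., m + 1, m` pushes `g` down into `G_m`,
a contradiction.
-/

namespace Monoid.PushoutI

open Function

variable {ι : Type*} {G : ι → Type*} [∀ i, Group (G i)] {H : Type*} [Group H]
  {φ : ∀ i, H →* G i}

variable (φ) in
def listProd (l : List (Σ i, G i)) : PushoutI φ :=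
  (l.map fun x => of x.1 x.2).prod

variable (φ) in
def ReducedList (l : List (Σ i, G i)) : Prop :=
  (∀ x ∈ l, x.2 ∉ (φ x.1).range) ∧ l.IsChain fun x y => x.1 ≠ y.1

def invRev (l : List (Σ i, G i)) : List (Σ i, G i) :=
  (l.map fun x => ⟨x.1, x.2⁻¹⟩).reverse

@[simp] lemma listProd_nil : listProd φ [] = 1 := rfl

@[simp] lemma listProd_cons (x : Σ i, G i) (l : List (Σ i, G i)) :
    listProd φ (x :: l) = of x.1 x.2 * listProd φ l :=
  List.prod_cons

@[simp] lemma listProd_append (l₁ l₂ : List (Σ i, G i)) :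
    listProd φ (l₁ ++ l₂) = listProd φ l₁ * listProd φ l₂ := by
  simp [listProd]

lemma listProd_invRev (l : List (Σ i, G i)) : listProd φ (invRev l) = (listProd φ l)⁻¹ := by
  induction l with
  | nil => simp [invRev]
  | cons x l ih => simp_all [invRev]

lemma ReducedList.of_cons {x : Σ i, G i} {l : List (Σ i, G i)}
    (hl : ReducedList φ (x :: l)) : ReducedList φ l :=
  ⟨fun y hy => hl.1 y (List.mem_cons_of_mem x hy), hl.2.tail⟩

lemma ReducedList.invRev {l : List (Σ i, G i)} (hl : ReducedList φ l) :
    ReducedList φ (invRev l) := by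
  refine ⟨?_, ?_⟩
  · simp only [PushoutI.invRev, List.mem_reverse, List.mem_map]
    rintro _ ⟨y, hy, rfl⟩ hmem
    exact hl.1 y hy (by simpa using inv_mem hmem)
  · rw [PushoutI.invRev, List.isChain_reverse, List.isChain_map]
    exact hl.2.imp fun _ _ h h' => h h'.symm

lemma ReducedList.listProd_notMem_base_range (hφ : ∀ i, Injective (φ i))
    {l : List (Σ i, G i)} (hl : ReducedList φ l) (hne : l ≠ []) :
    listProd φ l ∉ (base φ).range := by
  intro hmem
  let w : CoprodI.Word G := ⟨l, fun x hx h1 => hl.1 x hx (h1 ▸ one_mem _), hl.2⟩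
  have hprod : ofCoprodI w.prod = listProd φ l := by
    simp [w, CoprodI.Word.prod, listProd, map_list_prod, Function.comp_def]
  have := (show Reduced φ w from hl.1).eq_empty_of_mem_range hφ (hprod ▸ hmem)
  exact hne (congrArg CoprodI.Word.toList this)

lemma ReducedList.listProd_notMem_range_of (hφ : ∀ i, Injective (φ i))
    {x : Σ i, G i} {l : List (Σ i, G i)} (hl : ReducedList φ (x :: l)) {i : ι} (hx : x.1 ≠ i) :
    listProd φ (x :: l) ∉ (of i).range := by
  rintro ⟨y, hy⟩
  by_cases hyφ : y ∈ (φ i).range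
  · obtain ⟨b, rfl⟩ := hyφ
    exact hl.listProd_notMem_base_range hφ (List.cons_ne_nil x l)
      ⟨b, by rw [← hy, of_apply_eq_base]⟩
  · -- prepending the letter `y⁻¹` gives a reduced word with trivial product
    have hred : ReducedList φ (⟨i, y⁻¹⟩ :: x :: l) := by
      refine ⟨?_, hl.2.cons (by simpa using hx.symm)⟩
      rintro z (_ | ⟨_, hz⟩)
      · simpa using hyφ
      · exact hl.1 z hz
    refine hred.listProd_notMem_base_range hφ (List.cons_ne_nil _ _) ⟨1, ?_⟩
    rw [listProd_cons, ← hy, map_inv, inv_mul_cancel, map_one]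

lemma exists_eq_base_mul_listProd (hφ : ∀ i, Injective (φ i)) (g : PushoutI φ) :
    ∃ (h : H) (l : List (Σ i, G i)), ReducedList φ l ∧ g = base φ h * listProd φ l := by
  classical
  obtain ⟨d⟩ := NormalWord.transversal_nonempty φ hφ
  let w := NormalWord.equiv (d := d) g
  refine ⟨w.head, w.toList, ⟨?_, w.chain_ne⟩, ?_⟩
  · rintro ⟨i, c⟩ hmem hrange
    have h := (d.compl i).equiv_snd_eq_self_of_mem_of_one_mem (one_mem _) (w.normalized i c hmem)
    rw [(d.compl i).equiv_snd_eq_one_of_mem_of_one_mem (d.one_mem i) hrange] at h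
    exact w.ne_one ⟨i, c⟩ hmem (congrArg Subtype.val h).symm
  · conv_lhs => rw [← (NormalWord.equiv (d := d)).symm_apply_apply g]
    simp [w, NormalWord.equiv, NormalWord.prod, CoprodI.Word.prod, listProd, map_list_prod,
      Function.comp_def]

lemma ReducedList.conj_notMem_range (hφ : ∀ i, Injective (φ i)) {l : List (Σ i, G i)}
    (hl : ReducedList φ l) (hne : l ≠ []) {i : ι} (hhead : ∀ x ∈ l.head?, x.1 ≠ i)
    (hlast : ∀ x ∈ l.getLast?, x.1 ≠ i) {a : G i} (ha : a ∉ (φ i).range) :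
    listProd φ l * of i a * (listProd φ l)⁻¹ ∉ (of i).range := by
  obtain ⟨x, l', rfl⟩ := List.exists_cons_of_ne_nil hne
  have hlast' : ∀ y ∈ (PushoutI.invRev (x :: l')).head?, i ≠ y.1 := by
    simp only [PushoutI.invRev, List.head?_reverse, List.getLast?_map, Option.mem_map]
    rintro _ ⟨y, hy, rfl⟩
    exact (hlast y hy).symm
  have hred : ReducedList φ ((x :: l') ++ ⟨i, a⟩ :: PushoutI.invRev (x :: l')) := by
    refine ⟨?_, hl.2.append (hl.invRev.2.cons hlast') ?_⟩
    · simp only [List.mem_append, List.mem_cons]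
      rintro y ((hy | hy) | rfl | hy)
      exacts [hl.1 y (hy ▸ List.mem_cons_self), hl.1 y (List.mem_cons_of_mem x hy), ha,
        hl.invRev.1 y hy]
    · simpa using hlast
  have := hred.listProd_notMem_range_of (l := l' ++ _) hφ (hhead x rfl)
  rwa [← List.cons_append, listProd_append, listProd_cons ⟨i, a⟩, listProd_invRev,
    ← mul_assoc] at this

lemma ReducedList.exists_head_ne {l : List (Σ i, G i)} (hl : ReducedList φ l) (i : ι) :
    ∃ p ∈ (of (φ := φ) i).range, ∃ l', ReducedList φ l' ∧ (∀ x ∈ l'.head?, x.1 ≠ i) ∧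
      listProd φ l = p * listProd φ l' := by
  rcases l with _ | ⟨⟨j, c⟩, l⟩
  · exact ⟨1, one_mem _, [], hl, by simp, by simp⟩
  by_cases hj : j = i
  · subst hj
    exact ⟨of j c, ⟨c, rfl⟩, l, hl.of_cons,
      fun y hy => ((List.isChain_cons.mp hl.2).1 y hy).symm, listProd_cons _ _⟩
  · exact ⟨1, one_mem _, _, hl, by simpa using hj, (one_mul _).symm⟩

lemma ReducedList.exists_getLast_ne {l : List (Σ i, G i)} (hl : ReducedList φ l) {i : ι}
    (hhead : ∀ x ∈ l.head?, x.1 ≠ i) :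
    ∃ q ∈ (of (φ := φ) i).range, ∃ l', ReducedList φ l' ∧ (∀ x ∈ l'.head?, x.1 ≠ i) ∧
      (∀ x ∈ l'.getLast?, x.1 ≠ i) ∧ listProd φ l = listProd φ l' * q := by
  rcases List.eq_nil_or_concat' l with rfl | ⟨L, ⟨j, c⟩, rfl⟩
  · exact ⟨1, one_mem _, [], hl, by simp, by simp, by simp⟩
  by_cases hj : j = i
  · subst hj
    have hchain := List.isChain_append.mp hl.2
    refine ⟨of j c, ⟨c, rfl⟩, L, ⟨fun y hy => hl.1 y (List.mem_append_left _ hy), hchain.1⟩,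
      fun y hy => hhead y (List.mem_head?_append_of_mem_head? hy),
      fun y hy => hchain.2.2 y hy _ rfl, by simp [listProd]⟩
  · exact ⟨1, one_mem _, _, hl, hhead, by simpa using hj, (mul_one _).symm⟩

theorem mem_range_of_conj_mem_range (hφ : ∀ i, Injective (φ i)) {i : ι}
    (hN : (φ i).range.Normal) {a : G i} (ha : a ∉ (φ i).range) {g : PushoutI φ}
    (hg : g * of i a * g⁻¹ ∈ (of i).range) : g ∈ (of i).range := by
  obtain ⟨h, l, hl, rfl⟩ := exists_eq_base_mul_listProd hφ g
  obtain ⟨p, hp, l₁, hl₁, hhead₁, hl_eq⟩ := hl.exists_head_ne i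
  obtain ⟨_, ⟨c, rfl⟩, l₂, hl₂, hhead₂, hlast₂, hl₁_eq⟩ := hl₁.exists_getLast_ne hhead₁
  have hbase : base φ h * p ∈ (of i).range := mul_mem ⟨φ i h, of_apply_eq_base φ i h⟩ hp
  rw [hl_eq, hl₁_eq, ← mul_assoc, ← mul_assoc] at hg ⊢
  rcases eq_or_ne l₂ [] with rfl | hne
  · simpa using mul_mem hbase (MonoidHom.mem_range.mpr ⟨c, rfl⟩)
  have hca : c * a * c⁻¹ ∉ (φ i).range := fun hmem =>
    ha (by simpa [mul_assoc] using hN.conj_mem _ hmem c⁻¹)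
  refine absurd ?_ (hl₂.conj_notMem_range hφ hne hhead₂ hlast₂ hca)
  convert mul_mem (mul_mem (inv_mem hbase) hg) hbase using 1
  simp only [map_mul, map_inv]
  group

end Monoid.PushoutI

namespace IsCentralAmalgamIn

open Monoid PushoutI Function

variable {G : Type u} [Group G] {A C B D : Subgroup G}

def baseInclusion (hAC : IsCentralAmalgamIn A C B D) (b : Bool) : ↥B →* ↥(cond b A C) :=
  Subgroup.inclusion (by cases b; exacts [hAC.B_le_C, hAC.B_le_A])

lemma baseInclusion_injective (hAC : IsCentralAmalgamIn A C B D) (b : Bool) :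
    Injective (hAC.baseInclusion b) := by
  cases b <;> exact Subgroup.inclusion_injective _

lemma range_baseInclusion_true_normal (hAC : IsCentralAmalgamIn A C B D) :
    (hAC.baseInclusion true).range.Normal :=
  ⟨by
    rintro _ ⟨b, rfl⟩ a
    refine ⟨b, Subtype.ext ?_⟩
    simp only [baseInclusion, Subgroup.coe_inclusion, Subgroup.coe_mul, Subgroup.coe_inv]
    rw [← hAC.central_A b b.2 a a.2, mul_inv_cancel_right]⟩

lemma exists_injective_hom_pushoutI (hAC : IsCentralAmalgamIn A C B D) :
    ∃ Φ : ↥D →* PushoutI hAC.baseInclusion, Injective Φ ∧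
      ∀ a : ↥A, Φ (Subgroup.inclusion hAC.A_le a) = of (φ := hAC.baseInclusion) true a := by
  obtain ⟨Φ, ⟨hΦA, hΦC⟩, -⟩ := hAC.isPushout _ (of (φ := hAC.baseInclusion) true)
    (of (φ := hAC.baseInclusion) false) fun b hb =>
    (of_apply_eq_base hAC.baseInclusion true ⟨b, hb⟩).trans
      (of_apply_eq_base hAC.baseInclusion false ⟨b, hb⟩).symm
  have hle : ∀ b, cond b A C ≤ D := fun b => by cases b; exacts [hAC.C_le, hAC.A_le]
  let Ψ : PushoutI hAC.baseInclusion →* ↥D :=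
    lift (fun b => Subgroup.inclusion (hle b)) (Subgroup.inclusion (hAC.B_le_A.trans hAC.A_le))
      fun b => by cases b <;> rfl
  obtain ⟨θ, -, hθ⟩ := hAC.isPushout _ (Subgroup.inclusion hAC.A_le)
    (Subgroup.inclusion hAC.C_le) fun _ _ => rfl
  have hΨΦ : Ψ.comp Φ = MonoidHom.id ↥D := by
    refine (hθ _ ⟨?_, ?_⟩).trans (hθ _ ⟨MonoidHom.id_comp _, MonoidHom.id_comp _⟩).symm
    · ext a
      simp [MonoidHom.comp_assoc, hΦA, Ψ]
    · ext c
      simp [MonoidHom.comp_assoc, hΦC, Ψ]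
  exact ⟨Φ, LeftInverse.injective (g := Ψ) (DFunLike.congr_fun hΨΦ), DFunLike.congr_fun hΦA⟩

theorem mem_left_of_conj_mem (hAC : IsCentralAmalgamIn A C B D) {x g : G} (hxA : x ∈ A)
    (hxB : x ∉ B) (hg : g ∈ D) (hconj : g * x * g⁻¹ ∈ A) : g ∈ A := by
  obtain ⟨Φ, hΦ, hΦA⟩ := hAC.exists_injective_hom_pushoutI
  have hx : (⟨x, hxA⟩ : ↥A) ∉ (hAC.baseInclusion true).range := by
    rintro ⟨b, hb⟩
    exact hxB ((show (b : G) = x from congrArg Subtype.val hb) ▸ b.2)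
  have hΦconj : Φ ⟨g, hg⟩ * of true ⟨x, hxA⟩ * (Φ ⟨g, hg⟩)⁻¹ ∈ (of true).range := by
    refine ⟨⟨_, hconj⟩, ?_⟩
    rw [← hΦA, ← hΦA, ← map_inv, ← map_mul, ← map_mul]
    rfl
  obtain ⟨a, ha⟩ := mem_range_of_conj_mem_range hAC.baseInclusion_injective
    hAC.range_baseInclusion_true_normal hx hΦconj
  exact (show (a : G) = g from congrArg Subtype.val (hΦ ((hΦA a).trans ha))) ▸ a.2

end IsCentralAmalgamIn

namespace IteratedAmalgam

variable {G : Type u} [Group G] (S : IteratedAmalgam G)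

lemma Gn_mono : Monotone S.Gn :=
  monotone_nat_of_le_succ fun n => (S.amalgam n).A_le

lemma Bn_anti : Antitone S.Bn :=
  antitone_nat_of_succ_le S.B_antitone

lemma exists_mem_Gn (g : G) : ∃ n, g ∈ S.Gn n :=
  (Subgroup.mem_iSup_of_directed S.Gn_mono.directed_le).mp (S.iSup_G ▸ Subgroup.mem_top g)

lemma exists_notMem_Bn {x : G} (hx : x ≠ 1) : ∃ n, x ∉ S.Bn n := by
  by_contra! h
  exact hx (by simpa [S.B_iInf] using Subgroup.mem_iInf.mpr h)

theorem mem_Gn_of_conj_mem {m : ℕ} {x g : G} (hx : x ∈ S.Gn m) (hxB : x ∉ S.Bn m)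
    (hconj : g * x * g⁻¹ ∈ S.Gn m) : g ∈ S.Gn m := by
  obtain ⟨M, hM⟩ := S.exists_mem_Gn g
  induction M with
  | zero => exact S.Gn_mono (Nat.zero_le m) hM
  | succ M ih =>
    rcases le_or_gt (M + 1) m with hle | hlt
    · exact S.Gn_mono hle hM
    · have hmM : m ≤ M := Nat.lt_succ_iff.mp hlt
      exact ih ((S.amalgam M).mem_left_of_conj_mem (S.Gn_mono hmM hx)
        (fun hB => hxB (S.Bn_anti hmM hB)) hM (S.Gn_mono hmM hconj))

end IteratedAmalgam

theorem exists_commutator_not_mem_of_normal_of_spreadOut_general {G : Type u} [Group G]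
    (S : IteratedAmalgam G) (H : Subgroup G) (hH : S.SpreadOut H)
    (N : Subgroup G) (hNbot : N ≠ ⊥) :
    ∀ k : ℕ, ∃ h ∈ N, ∃ g ∈ H, g * h * g⁻¹ * h⁻¹ ∉ S.Gn k := by
  intro k
  obtain ⟨x, hxN, hx1⟩ := N.bot_or_exists_ne_one.resolve_left hNbot
  obtain ⟨j, hxj⟩ := S.exists_mem_Gn x
  obtain ⟨n, hxn⟩ := S.exists_notMem_Bn hx1
  set m := max k (max j n)
  have hxm : x ∈ S.Gn m := S.Gn_mono (by omega) hxj
  have hxBm : x ∉ S.Bn m := fun hB => hxn (S.Bn_anti (by omega) hB)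
  obtain ⟨g, hgH, hgm⟩ := SetLike.not_le_iff_exists.mp (hH m)
  refine ⟨x, hxN, g, hgH, fun hcomm => hgm (S.mem_Gn_of_conj_mem hxm hxBm ?_)⟩
  simpa using mul_mem (S.Gn_mono (le_max_left k _) hcomm) hxm

/-- If `H ≤ G` is spread out and `N` is a non-trivial normal subgroup of `H`, then for
every `k` there are `h ∈ N` and `g ∈ H` whose commutator `g * h * g⁻¹ * h⁻¹` lies
outside `G_k`. -/
theorem exists_commutator_not_mem_of_normal_of_spreadOut {G : Type u} [Group G]
    (S : IteratedAmalgam G) (H : Subgroup G) (hH : S.SpreadOut H)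
    (N : Subgroup G) (hNH : N ≤ H)
    (hNnormal : ∀ g ∈ H, ∀ x ∈ N, g * x * g⁻¹ ∈ N)
    (hNbot : N ≠ ⊥) :
    ∀ k : ℕ, ∃ h ∈ N, ∃ g ∈ H, g * h * g⁻¹ * h⁻¹ ∉ S.Gn k :=
  exists_commutator_not_mem_of_normal_of_spreadOut_general S H hH N hNbot
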